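/- arXiv:1809.09503 — 6 statements merged into one kernel-verified Lean document; each statement's English description precedes it below -/
import Mathlib

section
/- If U is an a,b-forcing set at level k for a cellular automaton f, and V is an a,b-forcing set at level ℓ for f, then the sumset U + V = {u + v : u ∈ U, v ∈ V} is an a,b-forcing set at level k + ℓ for f. -/
open Pointwise

/-- If `U` is an `a,b`-forcing set at level `k` for a monotonic,
shift-commuting cellular automaton `f` on `S^(ℤ^d)` (with `a < b` quiescent), and
`V` is an `a,b`-forcing set at level `ℓ`, then the sumset `U + V` is an
`a,b`-forcing set at level `k + ℓ`. -/
theorem sumset_forcing {d m : ℕ}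
    (f : ((Fin d → ℤ) → Fin (m + 1)) → ((Fin d → ℤ) → Fin (m + 1)))
    (hmono : ∀ x y, (∀ v, x v ≤ y v) → ∀ v, f x v ≤ f y v)
    (hshift : ∀ (x : (Fin d → ℤ) → Fin (m + 1)) (n : Fin d → ℤ),
      f (fun v => x (v + n)) = fun v => f x (v + n))
    (a b : Fin (m + 1)) (hab : a < b)
    (hqa : f (fun _ => a) = fun _ => a)
    (hqb : f (fun _ => b) = fun _ => b)
    (k ℓ : ℕ) (U V : Finset (Fin d → ℤ))
    (hU : ∀ x : (Fin d → ℤ) → Fin (m + 1),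
      (∀ v, x v ≤ b) → (∀ v ∈ U, x v ≤ a) → f^[k] x 0 ≤ a)
    (hV : ∀ x : (Fin d → ℤ) → Fin (m + 1),
      (∀ v, x v ≤ b) → (∀ v ∈ V, x v ≤ a) → f^[ℓ] x 0 ≤ a) :
    ∀ x : (Fin d → ℤ) → Fin (m + 1),
      (∀ v, x v ≤ b) → (∀ v ∈ U + V, x v ≤ a) → f^[k + ℓ] x 0 ≤ a := by
  intro x hxb hxUV
  -- x ≤ b is preserved by iterates
  have hb_pres : ∀ (n : ℕ) (y : (Fin d → ℤ) → Fin (m + 1)),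
      (∀ v, y v ≤ b) → ∀ v, f^[n] y v ≤ b := by
    intro n
    induction n with
    | zero => intro y hy v; simpa using hy v
    | succ n ih =>
      intro y hy v
      rw [Function.iterate_succ_apply]
      refine ih (f y) ?_ v
      intro w
      have := hmono y (fun _ => b) hy w
      simpa [hqb] using this
  -- shift commutes with iterates
  have hshift_it : ∀ (n : ℕ) (y : (Fin d → ℤ) → Fin (m + 1)) (u : Fin d → ℤ),
      f^[n] (fun v => y (v + u)) = fun v => f^[n] y (v + u) := by
    intro n
    induction n with
    | zero => intro y u; simp
    | succ n ih =>
      intro y u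
      rw [Function.iterate_succ_apply, hshift, ih]
      funext v
      rw [← Function.iterate_succ_apply, Function.iterate_succ_apply']
  have hz : ∀ u ∈ U, f^[ℓ] x u ≤ a := by
    intro u hu
    have h1 : f^[ℓ] (fun v => x (v + u)) 0 ≤ a := by
      refine hV _ (fun v => hxb _) ?_
      intro v hv
      exact hxUV (v + u) (by simpa [add_comm] using Finset.add_mem_add hu hv)
    rw [hshift_it] at h1
    simpa using h1
  have := hU (f^[ℓ] x) (hb_pres ℓ x hxb) hz
  rwa [Function.iterate_add_apply]
end

section
/- For the radius-1 cellular automaton f on S = {0, 1, ..., m} with local rule F(a,b,c) = b - 1 if b > 0 and c = 0, and F(a,b,c) = b otherwise, the following hold: (1) for every 1 ≤ k < m, the configuration x = ...000.m000... (with the single nonzero cell m at position 0) satisfies f^k(x)_0 ≠ 0, so {0} is the only minimal 0,m-forcing set at level k; (2) for every configuration y with y_1 = 0, f^m(y)_0 = 0, so {1} is a 0,m-forcing set at level m. -/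
/-!
A zero cell never changes, and a cell whose right neighbour is zero loses one unit at every
step. Hence if `y 1 = 0` the origin reaches `0` within `m` steps, while the lone `m` at the
origin still holds `m - k > 0` after `k < m` steps; so every forcing set at level `k` contains
`0`, and `{0}` itself is forcing.
-/

theorem Finset.eq_singleton_of_forall_ssubset_not {α : Type*} {P : Finset α → Prop} {a : α}
    {V : Finset α} (ha : P {a}) (hmem : a ∈ V) (hmin : ∀ W ⊂ V, ¬ P W) : V = {a} := by
  by_contra hne
  exact hmin {a}
    (Finset.ssubset_iff_subset_ne.2 ⟨Finset.singleton_subset_iff.2 hmem, Ne.symm hne⟩) ha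

namespace DecrementCA

/-- The paper's "`0,m`-forcing at level `k`". -/
def IsForcing (f : (ℤ → ℕ) → (ℤ → ℕ)) (m k : ℕ) (V : Finset ℤ) : Prop :=
  ∀ x : ℤ → ℕ, (∀ i, x i ≤ m) → (∀ i ∈ V, x i = 0) → f^[k] x 0 = 0

variable {f : (ℤ → ℕ) → (ℤ → ℕ)}
  (hf : ∀ x i, f x i = if 0 < x i ∧ x (i + 1) = 0 then x i - 1 else x i)
include hf

theorem apply_eq_zero {x : ℤ → ℕ} {j : ℤ} (h : x j = 0) : f x j = 0 := by
  simp [hf, h]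

theorem apply_of_right_eq_zero {x : ℤ → ℕ} {i : ℤ} (h : x (i + 1) = 0) :
    f x i = x i - 1 := by
  rw [hf]
  split_ifs <;> omega

theorem iterate_apply_eq_zero (n : ℕ) {x : ℤ → ℕ} {j : ℤ} (h : x j = 0) :
    f^[n] x j = 0 := by
  induction n generalizing x with
  | zero => exact h
  | succ n ih => exact ih (apply_eq_zero hf h)

theorem iterate_apply_of_right_eq_zero (n : ℕ) {x : ℤ → ℕ} {i : ℤ} (h : x (i + 1) = 0) :
    f^[n] x i = x i - n := by
  induction n generalizing x with
  | zero => rfl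
  | succ n ih =>
    rw [Function.iterate_succ_apply, ih (apply_eq_zero hf h), apply_of_right_eq_zero hf h]
    omega

theorem iterate_single_apply_zero (m k : ℕ) :
    f^[k] (fun i => if i = 0 then m else 0) 0 = m - k :=
  iterate_apply_of_right_eq_zero hf k (by simp)

theorem isForcing_singleton_zero (m k : ℕ) : IsForcing f m k {0} :=
  fun _ _ h => iterate_apply_eq_zero hf k (h 0 (Finset.mem_singleton_self 0))

theorem isForcing_singleton_one (m : ℕ) : IsForcing f m m {1} := fun x hx h => by
  rw [iterate_apply_of_right_eq_zero hf m (h 1 (Finset.mem_singleton_self 1))]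
  exact Nat.sub_eq_zero_of_le (hx 0)

theorem zero_mem_of_isForcing {m k : ℕ} (hkm : k < m) {V : Finset ℤ} (hV : IsForcing f m k V) :
    (0 : ℤ) ∈ V := by
  by_contra h0
  have hzero := hV (fun i => if i = 0 then m else 0) (fun i => by split_ifs <;> omega)
    (fun i hi => if_neg (by rintro rfl; exact h0 hi))
  rw [iterate_single_apply_zero hf] at hzero
  omega

end DecrementCA

open DecrementCA in
theorem decrement_forcing_general (m : ℕ)
    (f : (ℤ → ℕ) → (ℤ → ℕ))
    (hf : ∀ x i, f x i = if 0 < x i ∧ x (i + 1) = 0 then x i - 1 else x i) :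
    (∀ k, 1 ≤ k → k < m →
      f^[k] (fun i => if i = 0 then m else 0) 0 ≠ 0 ∧
      ∀ V : Finset ℤ,
        ((∀ x : ℤ → ℕ, (∀ i, x i ≤ m) → (∀ i ∈ V, x i = 0) → f^[k] x 0 = 0) ∧
          ∀ W ⊂ V, ¬ (∀ x : ℤ → ℕ, (∀ i, x i ≤ m) → (∀ i ∈ W, x i = 0) →
            f^[k] x 0 = 0)) →
        V = {0}) ∧
    ((∀ y : ℤ → ℕ, (∀ i, y i ≤ m) → y 1 = 0 → f^[m] y 0 = 0) ∧
      (∀ x : ℤ → ℕ, (∀ i, x i ≤ m) → (∀ i ∈ ({1} : Finset ℤ), x i = 0) →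
        f^[m] x 0 = 0)) := by
  refine ⟨fun k _ hkm => ⟨?_, ?_⟩,
    fun y hy h1 => isForcing_singleton_one hf m y hy (by simpa), isForcing_singleton_one hf m⟩
  · rw [iterate_single_apply_zero hf]
    omega
  · rintro V ⟨hV, hmin⟩
    exact Finset.eq_singleton_of_forall_ssubset_not (P := IsForcing f m k)
      (isForcing_singleton_zero hf m k) (zero_mem_of_isForcing hf hkm hV) hmin

/-- For the radius-1 CA on `S = {0,…,m}` that decrements a nonzero
state when its right neighbor is `0` and otherwise keeps it fixed:
(1) for `1 ≤ k < m`, the configuration with a single `m` at the origin satisfies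
`f^[k] x 0 ≠ 0`, and `{0}` is the only minimal `0,m`-forcing set at level `k`;
(2) for every configuration `y` (with values in `S`) with `y 1 = 0` we have
`f^[m] y 0 = 0`, i.e. `{1}` is a `0,m`-forcing set at level `m`. -/
theorem decrement_forcing (m : ℕ) (hm : 1 ≤ m)
    (f : (ℤ → ℕ) → (ℤ → ℕ))
    (hf : ∀ x i, f x i = if 0 < x i ∧ x (i + 1) = 0 then x i - 1 else x i) :
    (∀ k, 1 ≤ k → k < m →
      f^[k] (fun i => if i = 0 then m else 0) 0 ≠ 0 ∧
      ∀ V : Finset ℤ,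
        ((∀ x : ℤ → ℕ, (∀ i, x i ≤ m) → (∀ i ∈ V, x i = 0) → f^[k] x 0 = 0) ∧
          ∀ W ⊂ V, ¬ (∀ x : ℤ → ℕ, (∀ i, x i ≤ m) → (∀ i ∈ W, x i = 0) →
            f^[k] x 0 = 0)) →
        V = {0}) ∧
    ((∀ y : ℤ → ℕ, (∀ i, y i ≤ m) → y 1 = 0 → f^[m] y 0 = 0) ∧
      (∀ x : ℤ → ℕ, (∀ i, x i ≤ m) → (∀ i ∈ ({1} : Finset ℤ), x i = 0) →
        f^[m] x 0 = 0)) :=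
  decrement_forcing_general m f hf
end

section
/- The radius-1 cellular automaton f on S = {0, 1, 2} with local rule F(a,b,c) = 0 if a = 0, b ≤ 1, c ≤ 1; F(a,b,c) = 1 if b = 2, c ≤ 1; F(a,b,c) = 2 if a + b ≥ 2 and c = 2; and F(a,b,c) = b otherwise, is monotonic: if x ≤ y pointwise then f(x) ≤ f(y) pointwise. -/
/-- The local rule of the three-state cellular automaton of Example 2. -/
def ternaryRule : Fin 3 → Fin 3 → Fin 3 → Fin 3 := fun a b c =>
  if a = 0 ∧ b ≤ 1 ∧ c ≤ 1 then 0
  else if b = 2 ∧ c ≤ 1 then 1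
  else if 2 ≤ (a : ℕ) + (b : ℕ) ∧ c = 2 then 2
  else b

/-- The radius-1 CA on `{0,1,2}` with local rule `ternaryRule`
is monotonic: `x ≤ y` pointwise implies `f x ≤ f y` pointwise. -/
theorem ternary_monotonic (f : (ℤ → Fin 3) → (ℤ → Fin 3))
    (hf : ∀ x i, f x i = ternaryRule (x (i - 1)) (x i) (x (i + 1))) :
    ∀ x y : ℤ → Fin 3, (∀ i, x i ≤ y i) → ∀ i, f x i ≤ f y i := by
  have key : ∀ a b c a' b' c' : Fin 3, a ≤ a' → b ≤ b' → c ≤ c' →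
      ternaryRule a b c ≤ ternaryRule a' b' c' := by decide
  intro x y hxy i
  rw [hf, hf]
  exact key _ _ _ _ _ _ (hxy _) (hxy _) (hxy _)
end

section
/- For the three-state cellular automaton f of the previous context and the configuration x consisting of N consecutive 2-states (at positions 0 through N-1) surrounded by 0-states: for all 0 ≤ t ≤ N, f^t(x) consists of N - t consecutive 2-states followed by t consecutive 1-states, surrounded by 0s; and for all 0 ≤ s ≤ N, f^{N+s}(x) consists of N - s consecutive 1-states (at positions s through N-1), surrounded by 0s. In particular f^{2N}(x) is the all-0 configuration. -/
/-- Intermediate configuration: `2`s on `[0, N-t)`, `1`s on `[N-t, N)`. -/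
def ternaryY (N t : ℕ) : ℤ → Fin 3 := fun i =>
  if 0 ≤ i ∧ i < (N : ℤ) - (t : ℤ) then 2
  else if (N : ℤ) - (t : ℤ) ≤ i ∧ i < (N : ℤ) then 1
  else 0

/-- Second-phase configuration: `1`s on `[s, N)`. -/
def ternaryZ (N s : ℕ) : ℤ → Fin 3 := fun i =>
  if (s : ℤ) ≤ i ∧ i < (N : ℤ) then 1 else 0

lemma ternary_ruleY (N t : ℕ) (ht : t < N) (i : ℤ) :
    ternaryRule (ternaryY N t (i-1)) (ternaryY N t i) (ternaryY N t (i+1))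
      = ternaryY N (t+1) i := by
  have ht' : (t:ℤ) < N := by exact_mod_cast ht
  unfold ternaryY
  push_cast
  split_ifs <;> first | rfl | decide | (exfalso; omega)

lemma ternary_ruleZ (N s : ℕ) (hs : s < N) (i : ℤ) :
    ternaryRule (ternaryZ N s (i-1)) (ternaryZ N s i) (ternaryZ N s (i+1))
      = ternaryZ N (s+1) i := by
  have hs' : (s:ℤ) < N := by exact_mod_cast hs
  unfold ternaryZ
  push_cast
  split_ifs <;> first | rfl | decide | (exfalso; omega)

/-- For the three-state CA `f` and the island `x = ∞0 2^N 0∞`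
(with the `2`s at positions `0,…,N-1`): for `0 ≤ t ≤ N`,
`f^[t] x = ∞0 2^{N-t} 1^t 0∞`; for `0 ≤ s ≤ N`, `f^[N+s] x` consists of
`1`s exactly at positions `s,…,N-1`; in particular `f^[2N] x = ∞0∞`. -/
theorem ternary_erodes_island (f : (ℤ → Fin 3) → (ℤ → Fin 3))
    (hf : ∀ x i, f x i = ternaryRule (x (i - 1)) (x i) (x (i + 1)))
    (N : ℕ)
    (x : ℤ → Fin 3) (hx : x = fun i => if 0 ≤ i ∧ i < (N : ℤ) then 2 else 0) :
    (∀ t : ℕ, t ≤ N →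
      f^[t] x = fun i =>
        if 0 ≤ i ∧ i < (N : ℤ) - (t : ℤ) then 2
        else if (N : ℤ) - (t : ℤ) ≤ i ∧ i < (N : ℤ) then 1
        else 0) ∧
    (∀ s : ℕ, s ≤ N →
      f^[N + s] x = fun i =>
        if (s : ℤ) ≤ i ∧ i < (N : ℤ) then 1 else 0) ∧
    f^[2 * N] x = fun _ => 0 := by
  have hY : ∀ t : ℕ, t ≤ N → f^[t] x = ternaryY N t := by
    intro t
    induction t with
    | zero =>
        intro _
        subst hx
        funext i
        simp only [Function.iterate_zero, id_eq, ternaryY]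
        split_ifs <;> first | rfl | (exfalso; omega)
    | succ t ih =>
        intro ht
        have ht' : t < N := Nat.lt_of_succ_le ht
        rw [Function.iterate_succ_apply', ih ht'.le]
        funext i
        rw [hf]
        exact ternary_ruleY N t ht' i
  have hZ : ∀ s : ℕ, s ≤ N → f^[N + s] x = ternaryZ N s := by
    intro s
    induction s with
    | zero =>
        intro _
        rw [Nat.add_zero, hY N le_rfl]
        funext i
        simp only [ternaryY, ternaryZ]
        split_ifs <;> first | rfl | (exfalso; omega)
    | succ s ih =>
        intro hs
        have hs' : s < N := Nat.lt_of_succ_le hs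
        rw [Nat.add_succ, Function.iterate_succ_apply', ih hs'.le]
        funext i
        rw [hf]
        exact ternary_ruleZ N s hs' i
  refine ⟨fun t ht => hY t ht, fun s hs => hZ s hs, ?_⟩
  have := hZ N le_rfl
  rw [two_mul, this]
  funext i
  simp only [ternaryZ]
  split_ifs with h
  · exact absurd h (by omega)
  · rfl
end

section
/- The three-state cellular automaton of Example 2 (local rule F as in the previous context) is an eroder: for every configuration x with x_i = 0 for all but finitely many i, there exists n ∈ ℕ with f^n(x) equal to the all-0 configuration. -/
set_option maxHeartbeats 2000000

/-- A "staircase" configuration: `2` on `[l, min m r]`, `1` on `(m, r] ∩ [l, r]`,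
`0` elsewhere. -/
def ternConf (l m r : ℤ) : ℤ → Fin 3 := fun i =>
  if l ≤ i ∧ i ≤ r then (if i ≤ m then 2 else 1) else 0

lemma ternaryRule_mono : ∀ a a' b b' c c' : Fin 3, a ≤ a' → b ≤ b' → c ≤ c' →
    ternaryRule a b c ≤ ternaryRule a' b' c' := by decide

lemma ternConf_step (l m r : ℤ) (hmr : m ≤ r) (i : ℤ) :
    ternaryRule (ternConf l m r (i-1)) (ternConf l m r i) (ternConf l m r (i+1))
      = ternConf (if l ≤ m then l else l+1) (m-1) r i := by
  unfold ternConf ternaryRule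
  split_ifs <;> first | rfl | omega

/-- The three-state CA of Example 2 is an eroder: every
configuration that is `0` outside a finite set is eventually mapped to the
all-`0` configuration. -/
theorem ternary_eroder (f : (ℤ → Fin 3) → (ℤ → Fin 3))
    (hf : ∀ x i, f x i = ternaryRule (x (i - 1)) (x i) (x (i + 1))) :
    ∀ x : ℤ → Fin 3, {i : ℤ | x i ≠ 0}.Finite →
      ∃ n : ℕ, f^[n] x = fun _ => 0 := by
  intro x hx
  -- bound the support
  obtain ⟨a, ha⟩ := hx.bddAbove
  obtain ⟨b, hb⟩ := hx.bddBelow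
  set N : ℕ := a.natAbs + b.natAbs with hNdef
  have hsupp : ∀ i : ℤ, ¬(-(N:ℤ) ≤ i ∧ i ≤ (N:ℤ)) → x i = 0 := by
    intro i hi
    by_contra h
    have h1 := ha (show i ∈ {i : ℤ | x i ≠ 0} from h)
    have h2 := hb (show i ∈ {i : ℤ | x i ≠ 0} from h)
    omega
  -- trajectory of the dominating configuration
  have hiter : ∀ t : ℕ, f^[t] (ternConf (-(N:ℤ)) N N)
      = ternConf (max (-(N:ℤ)) ((t:ℤ) - (3*N+1))) ((N:ℤ) - t) N := by
    intro t
    induction t with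
    | zero =>
      simp only [Function.iterate_zero, id_eq, Nat.cast_zero]
      have : max (-(N:ℤ)) ((0:ℤ) - (3*N+1)) = -(N:ℤ) := by omega
      rw [this]; norm_num
    | succ t ih =>
      rw [Function.iterate_succ_apply', ih]
      funext i
      rw [hf]
      rw [ternConf_step _ _ _ (by omega)]
      have h1 : (if max (-(N:ℤ)) ((t:ℤ) - (3*N+1)) ≤ (N:ℤ) - t
          then max (-(N:ℤ)) ((t:ℤ) - (3*N+1))
          else max (-(N:ℤ)) ((t:ℤ) - (3*N+1)) + 1)
          = max (-(N:ℤ)) (((t:ℕ)+1:ℤ) - (3*N+1)) := by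
        split_ifs <;> omega
      have h2 : (N:ℤ) - t - 1 = (N:ℤ) - ((t:ℕ)+1:ℤ) := by ring
      rw [h1, h2]
      push_cast
      ring_nf
  -- monotonicity of f
  have hmono : ∀ u v : ℤ → Fin 3, (∀ i, u i ≤ v i) → ∀ i, f u i ≤ f v i := by
    intro u v h i
    rw [hf, hf]
    exact ternaryRule_mono _ _ _ _ _ _ (h _) (h _) (h _)
  have hmono_iter : ∀ n : ℕ, ∀ u v : ℤ → Fin 3, (∀ i, u i ≤ v i) →
      ∀ i, f^[n] u i ≤ f^[n] v i := by
    intro n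
    induction n with
    | zero => intro u v h i; exact h i
    | succ n ih =>
      intro u v h i
      rw [Function.iterate_succ_apply', Function.iterate_succ_apply']
      exact hmono _ _ (ih u v h) i
  -- x is dominated by the staircase
  have hdom : ∀ i, x i ≤ ternConf (-(N:ℤ)) N N i := by
    intro i
    unfold ternConf
    split_ifs with h1 h2
    · exact (show ∀ z : Fin 3, z ≤ 2 by decide) _
    · omega
    · rw [hsupp i h1]
  refine ⟨4*N+2, ?_⟩
  have hzero : f^[4*N+2] (ternConf (-(N:ℤ)) N N) = fun _ => 0 := by
    rw [hiter]
    funext i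
    unfold ternConf
    rw [if_neg (by push_cast; omega)]
  funext i
  have h1 := hmono_iter (4*N+2) x _ hdom i
  rw [hzero] at h1
  exact le_antisymm h1 ((show ∀ z : Fin 3, 0 ≤ z by decide) _)
end

section
/- Let f be a one-dimensional monotonic CA of radius r, a < b quiescent states, and x the step of type a,b. For every t > 0, the set U_t = {-rt, -rt+1, ..., -L^t_{a,b} - 1} is an a,b-forcing set at level t for f, where L^t_{a,b} = max{ i : f^t(x)_i = a }. -/
/-- Let `f` be a one-dimensional monotonic shift-commuting CA of
radius `r` with quiescent states `a < b`, and let `x` be the step of type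
`a,b`. For every `t > 0`, the set `U_t = {-rt, …, -L^t - 1}` is an
`a,b`-forcing set at level `t`, where `L^t` is the largest `i` with
`f^[t] x i = a`. -/
theorem step_gives_forcing (m : ℕ) (r : ℕ)
    (f : (ℤ → Fin (m + 1)) → (ℤ → Fin (m + 1)))
    (hmono : ∀ x y, (∀ i, x i ≤ y i) → ∀ i, f x i ≤ f y i)
    (hshift : ∀ (x : ℤ → Fin (m + 1)) (n : ℤ),
      f (fun i => x (i + n)) = fun i => f x (i + n))
    (hrad : ∀ x y : ℤ → Fin (m + 1),
      (∀ i : ℤ, |i| ≤ (r : ℤ) → x i = y i) → f x 0 = f y 0)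
    (a b : Fin (m + 1)) (hab : a < b)
    (hqa : f (fun _ => a) = fun _ => a)
    (hqb : f (fun _ => b) = fun _ => b)
    (x : ℤ → Fin (m + 1)) (hx : x = fun i => if i < 0 then a else b)
    (Lt : ℕ → ℤ)
    (hLt : ∀ t, f^[t] x (Lt t) = a ∧ ∀ i, f^[t] x i = a → i ≤ Lt t) :
    ∀ t : ℕ, 0 < t →
      ∀ y : ℤ → Fin (m + 1), (∀ i, y i ≤ b) →
        (∀ i ∈ Finset.Icc (-(r : ℤ) * (t : ℤ)) (-(Lt t) - 1), y i ≤ a) →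
        f^[t] y 0 ≤ a := by
  intro t ht y hyb hya
  have hmonoIt : ∀ (k : ℕ) (u v : ℤ → Fin (m + 1)), (∀ i, u i ≤ v i) →
      ∀ i, f^[k] u i ≤ f^[k] v i := by
    intro k
    induction k with
    | zero => intro u v h i; simpa using h i
    | succ k ih =>
      intro u v h i
      rw [Function.iterate_succ_apply, Function.iterate_succ_apply]
      exact ih _ _ (hmono u v h) i
  have hshiftIt : ∀ (k : ℕ) (u : ℤ → Fin (m + 1)) (n : ℤ),
      f^[k] (fun i => u (i + n)) = fun i => f^[k] u (i + n) := by
    intro k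
    induction k with
    | zero => intro u n; simp
    | succ k ih =>
      intro u n
      rw [Function.iterate_succ_apply, hshift u n, ih (f u) n,
        Function.iterate_succ_apply]
  have hradIt : ∀ (k : ℕ) (u v : ℤ → Fin (m + 1)),
      (∀ i : ℤ, |i| ≤ (r : ℤ) * k → u i = v i) → f^[k] u 0 = f^[k] v 0 := by
    intro k
    induction k with
    | zero => intro u v h; simpa using h 0 (by simp)
    | succ k ih =>
      intro u v h
      rw [Function.iterate_succ_apply, Function.iterate_succ_apply]
      apply ih
      intro j hj
      have h1 : f u j = f (fun i => u (i + j)) 0 := by rw [hshift]; simp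
      have h2 : f v j = f (fun i => v (i + j)) 0 := by rw [hshift]; simp
      rw [h1, h2]
      apply hrad
      intro i hi
      apply h
      have habs : |i + j| ≤ |i| + |j| := abs_add_le _ _
      push_cast
      push_cast at hj
      linarith
  set L := Lt t with hL
  set z : ℤ → Fin (m + 1) := fun i => x (i + L) with hz
  set w : ℤ → Fin (m + 1) := fun i => if |i| ≤ (r : ℤ) * t then y i else z i with hw
  have hwz : ∀ i, w i ≤ z i := by
    intro i
    by_cases hi : |i| ≤ (r : ℤ) * t
    · simp only [hw, if_pos hi]
      by_cases hi2 : i + L < 0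
      · have hmem : i ∈ Finset.Icc (-(r : ℤ) * (t : ℤ)) (-(Lt t) - 1) := by
          rw [Finset.mem_Icc, neg_mul]
          have := abs_le.mp hi
          omega
        have hya' := hya i hmem
        have : z i = a := by simp [hz, hx, if_pos hi2]
        rw [this]; exact hya'
      · have : z i = b := by simp [hz, hx, if_neg hi2]
        rw [this]; exact hyb i
    · simp [hw, if_neg hi]
  have h1 : f^[t] w 0 = f^[t] y 0 :=
    hradIt t w y (fun i hi => by simp [hw, if_pos hi])
  have h2 : f^[t] w 0 ≤ f^[t] z 0 := hmonoIt t w z hwz 0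
  have h3 : f^[t] z 0 = a := by
    have he : f^[t] z 0 = f^[t] x (0 + L) := by rw [hz, hshiftIt t x L]
    rw [he, zero_add]
    exact (hLt t).1
  rw [← h1, ← h3]
  exact h2
end
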